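/- Let {X_i}_{i∈I} be a finite measurable partition of X with μ(X_i) > 0 for each i, K_i := K restricted to X_i×Y, μ_i := μ restricted to X_i, and let 𝒥 be a partition of the index set I. Suppose π = Σ_{i∈I} (u_i⊗v_i)·K_i and π' = Σ_{i∈I} (u'_i⊗v'_i)·K_i, with all scaling functions in L^∞₊, satisfy: P_X(π restricted to X_i×Y) = P_X(π' restricted to X_i×Y) = μ_i for every i ∈ I; for every J ∈ 𝒥, Σ_{i∈J} P_Y(π' restricted to X_i×Y) = Σ_{i∈J} P_Y(π restricted to X_i×Y); and v'_i = v'_j ν-a.e. whenever i, j ∈ J for some J ∈ 𝒥. Then KL(π|K) − KL(π'|K) = KL(π|π'). -/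

import Mathlib

open MeasureTheory ENNReal Filter Topology

noncomputable section

/-- `phi s = s * log s - s + 1` (note `phi 0 = 1` since `Real.log 0 = 0`);
this is the integrand of the Kullback--Leibler divergence. -/
def phi (s : ℝ) : ℝ := s * Real.log s - s + 1

open Classical in
/-- Kullback--Leibler divergence `KL(ρ|σ) ∈ [0,∞]`: `∫ phi (dρ/dσ) dσ` if `ρ ≪ σ`,
and `∞` otherwise (nonnegativity of `ρ` is automatic for measures). -/
def KL {Z : Type*} [MeasurableSpace Z] (ρ σ : Measure Z) : ℝ≥0∞ :=
  if ρ ≪ σ then ∫⁻ z, ENNReal.ofReal (phi ((ρ.rnDeriv σ) z).toReal) ∂σ else ⊤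

/-- The set `Π(μh, νh)` of transport plans with marginals `μh` and `νh`. -/
def Coupling {X Y : Type*} [MeasurableSpace X] [MeasurableSpace Y]
    (μh : Measure X) (νh : Measure Y) : Set (Measure (X × Y)) :=
  {π | π.map Prod.fst = μh ∧ π.map Prod.snd = νh}

/-- The Gibbs kernel measure `K = exp(-c/ε) ⋅ (μ ⊗ ν)`. -/
def Kmeas {X Y : Type*} [MeasurableSpace X] [MeasurableSpace Y]
    (μ : Measure X) (ν : Measure Y) [SFinite ν] (c : X × Y → ℝ) (ε : ℝ) : Measure (X × Y) :=
  (μ.prod ν).withDensity fun p => ENNReal.ofReal (Real.exp (-c p / ε))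

/-- The product density `(u ⊗ v)(x,y) = u x * v y`, as an `ℝ≥0∞`-valued density. -/
def prodDensity {X Y : Type*} (u : X → ℝ) (v : Y → ℝ) : X × Y → ℝ≥0∞ :=
  fun p => ENNReal.ofReal (u p.1 * v p.2)

/-- `L^∞₊(μ)`: measurable, a.e. nonnegative, essentially bounded functions. -/
def LinftyPlus {Z : Type*} [MeasurableSpace Z] (μ : Measure Z) (u : Z → ℝ) : Prop :=
  Measurable u ∧ (∀ᵐ z ∂μ, 0 ≤ u z) ∧ ∃ C : ℝ, ∀ᵐ z ∂μ, u z ≤ C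


/-!
Write `π = g·K` and `π' = g'·K`. Pointwise `φ(g) = g' φ(g/g') + φ(g') + (g - g') log g'`, so the
identity reduces to `∫ log g' dπ = ∫ log g' dπ'`. On the cell `Xᵢ × Y` one has
`log g' = log u'ᵢ(x) + log v'ᵢ(y)`: the `x`-parts integrate to the same value against `π` and `π'`
because both have first marginal `μ|Xᵢ` on that cell, and the `y`-parts do because `v'ᵢ` depends
only on the composite cell `J ∋ i`, over which the summed second marginals agree.

Integrability of `log g'` and `π ≪ π'` follow from `π ≤ D • π'`. Here `exp(-cmax/ε) ≤ k ≤ 1`: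
the first-marginal constraint forces `u'ᵢ ≥ 1/‖v'ᵢ‖_∞` on `Xᵢ`, and comparing second marginals over
a composite cell gives `vᵢ ν ≤ M • v'ᵢ ν`, using `μ(Xᵢ) > 0`.
-/

open InformationTheory
open scoped NNReal

lemma phi_eq_klFun : phi = klFun := by
  funext s
  rw [phi, klFun_apply]
  ring

lemma phi_nonneg {s : ℝ} (hs : 0 ≤ s) : 0 ≤ phi s := phi_eq_klFun ▸ klFun_nonneg hs

lemma continuous_phi : Continuous phi := phi_eq_klFun ▸ continuous_klFun

lemma measurable_phi : Measurable phi := continuous_phi.measurable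

lemma phi_eq_mul_phi_div_add {s t : ℝ} (h : t = 0 → s = 0) :
    phi s = t * phi (s / t) + phi t + (s - t) * Real.log t := by
  rcases eq_or_ne t 0 with ht | ht
  · simp [ht, h ht]
  rcases eq_or_ne s 0 with hs | hs
  · simp [hs, phi]
    ring
  · rw [phi, phi, phi, Real.log_div hs ht]
    field_simp
    ring

lemma ofReal_exp_neg_div_le_one {c ε : ℝ} (hc : 0 ≤ c) (hε : 0 < ε) :
    ENNReal.ofReal (Real.exp (-c / ε)) ≤ 1 :=
  ofReal_le_one.2 (Real.exp_le_one_iff.2 (div_nonpos_of_nonpos_of_nonneg (neg_nonpos.2 hc) hε.le))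

section KLWithDensity

variable {Z : Type*} [MeasurableSpace Z] {K : Measure Z}

lemma integrable_comp_of_ae_mem_Icc [IsFiniteMeasure K] {h : ℝ → ℝ} {a b : ℝ}
    (hh : Measurable h) (hcont : ContinuousOn h (Set.Icc a b)) {f : Z → ℝ} (hf : Measurable f)
    (hab : ∀ᵐ z ∂K, f z ∈ Set.Icc a b) : Integrable (fun z => h (f z)) K := by
  obtain ⟨B, hB⟩ := isCompact_Icc.exists_bound_of_continuousOn hcont
  exact Integrable.of_bound (hh.comp hf).aestronglyMeasurable B (hab.mono fun z hz => hB _ hz)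

lemma integrable_mul_log_of_ae_le_mul [IsFiniteMeasure K] {f f' : Z → ℝ} (hf : Measurable f)
    (hf' : Measurable f') {C D : ℝ} (hf'C : ∀ᵐ z ∂K, f' z ∈ Set.Icc 0 C)
    (hf0 : ∀ᵐ z ∂K, 0 ≤ f z) (hff' : ∀ᵐ z ∂K, f z ≤ D * f' z) :
    Integrable (fun z => f z * Real.log (f' z)) K := by
  have hint : Integrable (fun z => f' z * Real.log (f' z)) K :=
    integrable_comp_of_ae_mem_Icc (measurable_id.mul Real.measurable_log)
      Real.continuous_mul_log.continuousOn hf' hf'C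
  refine (hint.norm.const_mul D).mono'
    (hf.mul (Real.measurable_log.comp hf')).aestronglyMeasurable ?_
  filter_upwards [hf'C, hf0, hff'] with z hz h0 hle
  rw [Real.norm_eq_abs, Real.norm_eq_abs, abs_mul, abs_mul, abs_of_nonneg h0, abs_of_nonneg hz.1,
    ← mul_assoc]
  exact mul_le_mul_of_nonneg_right hle (abs_nonneg _)

lemma integral_phi_eq_integral_mul_phi_div_add {f f' : Z → ℝ}
    (hφf : Integrable (fun z => phi (f z)) K) (hφf' : Integrable (fun z => phi (f' z)) K)
    (hflog : Integrable (fun z => f z * Real.log (f' z)) K)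
    (hf'log : Integrable (fun z => f' z * Real.log (f' z)) K)
    (hzero : ∀ᵐ z ∂K, f' z = 0 → f z = 0)
    (hcross : ∫ z, f z * Real.log (f' z) ∂K = ∫ z, f' z * Real.log (f' z) ∂K) :
    Integrable (fun z => f' z * phi (f z / f' z)) K ∧
      ∫ z, phi (f z) ∂K = ∫ z, f' z * phi (f z / f' z) ∂K + ∫ z, phi (f' z) ∂K := by
  have hmid : (fun z => f' z * phi (f z / f' z)) =ᵐ[K] fun z =>
      phi (f z) - phi (f' z) - (f z * Real.log (f' z) - f' z * Real.log (f' z)) := by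
    filter_upwards [hzero] with z hz
    rw [phi_eq_mul_phi_div_add hz]
    ring
  refine ⟨((hφf.sub hφf').sub (hflog.sub hf'log)).congr hmid.symm, ?_⟩
  have h1 := integral_sub (hφf.sub hφf') (hflog.sub hf'log)
  have h2 := integral_sub hφf hφf'
  have h3 := integral_sub hflog hf'log
  simp only [Pi.sub_apply] at h1 h2 h3
  rw [integral_congr_ae hmid, h1, h2, h3, hcross]
  ring

variable {g g' : Z → ℝ≥0∞}

lemma kl_withDensity_eq_ofReal_integral [SigmaFinite K] (hg : Measurable g)
    (hint : Integrable (fun z => phi (g z).toReal) K) :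
    KL (K.withDensity g) K = ENNReal.ofReal (∫ z, phi (g z).toReal ∂K) := by
  rw [KL, if_pos (withDensity_absolutelyContinuous K g),
    ofReal_integral_eq_lintegral_ofReal hint (ae_of_all _ fun _ => phi_nonneg toReal_nonneg)]
  exact lintegral_congr_ae ((Measure.rnDeriv_withDensity K hg).mono fun z hz => by simp only [hz])

lemma kl_withDensity_withDensity_eq_ofReal_integral [SigmaFinite K] (hg : Measurable g)
    (hg' : Measurable g') (hg'_top : ∀ᵐ z ∂K, g' z ≠ ∞) (hzero : ∀ᵐ z ∂K, g' z = 0 → g z = 0)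
    (hint : Integrable (fun z => (g' z).toReal * phi ((g z).toReal / (g' z).toReal)) K) :
    KL (K.withDensity g) (K.withDensity g') =
      ENNReal.ofReal (∫ z, (g' z).toReal * phi ((g z).toReal / (g' z).toReal) ∂K) := by
  have hdiv : Measurable (g / g') := hg.div hg'
  have hπ : K.withDensity g = (K.withDensity g').withDensity (g / g') := by
    rw [← withDensity_mul K hg' hdiv]
    refine withDensity_congr_ae ?_
    filter_upwards [hg'_top, hzero] with z htop h0
    rcases eq_or_ne (g' z) 0 with h | h
    · simp [h, h0 h]
    · simp [ENNReal.mul_div_cancel h htop]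
  have : SigmaFinite (K.withDensity g') := SigmaFinite.withDensity_of_ne_top hg'_top
  rw [KL, if_pos (hπ ▸ withDensity_absolutelyContinuous _ _), ofReal_integral_eq_lintegral_ofReal
    hint (ae_of_all _ fun _ => mul_nonneg toReal_nonneg (phi_nonneg (by positivity)))]
  calc ∫⁻ z, ENNReal.ofReal (phi ((K.withDensity g).rnDeriv (K.withDensity g') z).toReal)
        ∂K.withDensity g'
      = ∫⁻ z, ENNReal.ofReal (phi (g z / g' z).toReal) ∂K.withDensity g' := by
        rw [hπ]
        exact lintegral_congr_ae ((Measure.rnDeriv_withDensity _ hdiv).mono fun z hz => by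
          simp only [hz, Pi.div_apply])
    _ = ∫⁻ z, g' z * ENNReal.ofReal (phi (g z / g' z).toReal) ∂K :=
        lintegral_withDensity_eq_lintegral_mul K hg'
          (measurable_phi.comp hdiv.ennreal_toReal).ennreal_ofReal
    _ = _ := by
        refine lintegral_congr_ae (hg'_top.mono fun z htop => ?_)
        simp only [ENNReal.ofReal_mul toReal_nonneg, ofReal_toReal htop, toReal_div]

variable [IsFiniteMeasure K]

lemma integrable_log_toReal_withDensity (hg : Measurable g) (hg' : Measurable g') {C D : ℝ≥0}
    (hg'C : ∀ᵐ z ∂K, g' z ≤ C) (hgg' : ∀ᵐ z ∂K, g z ≤ D * g' z) :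
    Integrable (fun z => Real.log (g' z).toReal) (K.withDensity g) := by
  have hg_top : ∀ᵐ z ∂K, g z < ∞ := by
    filter_upwards [hg'C, hgg'] with z hC hD
    exact hD.trans_lt (mul_lt_top coe_lt_top (hC.trans_lt coe_lt_top))
  rw [integrable_withDensity_iff hg hg_top]
  simp_rw [mul_comm (Real.log _)]
  refine integrable_mul_log_of_ae_le_mul (C := C) (D := D) hg.ennreal_toReal hg'.ennreal_toReal ?_
    (ae_of_all _ fun _ => toReal_nonneg) ?_
  · filter_upwards [hg'C] with z hz
    exact ⟨toReal_nonneg, by simpa using toReal_mono coe_ne_top hz⟩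
  · filter_upwards [hg'C, hgg'] with z hC hD
    simpa using toReal_mono (mul_ne_top coe_ne_top (hC.trans_lt coe_lt_top).ne) hD

theorem kl_withDensity_eq_add_of_integral_log_eq (hg : Measurable g) (hg' : Measurable g')
    {C D : ℝ≥0} (hg'C : ∀ᵐ z ∂K, g' z ≤ C) (hgg' : ∀ᵐ z ∂K, g z ≤ D * g' z)
    (hlog : ∫ z, Real.log (g' z).toReal ∂K.withDensity g =
      ∫ z, Real.log (g' z).toReal ∂K.withDensity g') :
    KL (K.withDensity g) K = KL (K.withDensity g) (K.withDensity g') + KL (K.withDensity g') K := by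
  set f : Z → ℝ := fun z => (g z).toReal
  set f' : Z → ℝ := fun z => (g' z).toReal
  have hg'_top : ∀ᵐ z ∂K, g' z < ∞ := hg'C.mono fun z hz => hz.trans_lt coe_lt_top
  have hg_top : ∀ᵐ z ∂K, g z < ∞ := by
    filter_upwards [hg'_top, hgg'] with z htop hz
    exact hz.trans_lt (mul_lt_top coe_lt_top htop)
  have hf'_mem : ∀ᵐ z ∂K, f' z ∈ Set.Icc 0 (C : ℝ) := by
    filter_upwards [hg'C] with z hz
    exact ⟨toReal_nonneg, by simpa using toReal_mono coe_ne_top hz⟩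
  have hff' : ∀ᵐ z ∂K, f z ≤ D * f' z := by
    filter_upwards [hgg', hg'_top] with z hz htop
    simpa using toReal_mono (mul_ne_top coe_ne_top htop.ne) hz
  have hf_mem : ∀ᵐ z ∂K, f z ∈ Set.Icc 0 (D * C : ℝ) := by
    filter_upwards [hff', hf'_mem] with z hz hz'
    exact ⟨toReal_nonneg, hz.trans (mul_le_mul_of_nonneg_left hz'.2 D.2)⟩
  have hφf := integrable_comp_of_ae_mem_Icc measurable_phi continuous_phi.continuousOn
    hg.ennreal_toReal hf_mem
  have hφf' := integrable_comp_of_ae_mem_Icc measurable_phi continuous_phi.continuousOn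
    hg'.ennreal_toReal hf'_mem
  have hf'log := integrable_mul_log_of_ae_le_mul (D := 1) hg'.ennreal_toReal hg'.ennreal_toReal
    hf'_mem (ae_of_all _ fun _ => toReal_nonneg) (ae_of_all _ fun _ => (one_mul _).ge)
  have hcross : ∫ z, f z * Real.log (f' z) ∂K = ∫ z, f' z * Real.log (f' z) ∂K := by
    simpa [integral_withDensity_eq_integral_toReal_smul hg hg_top,
      integral_withDensity_eq_integral_toReal_smul hg' hg'_top] using hlog
  obtain ⟨hmid, hreal⟩ := integral_phi_eq_integral_mul_phi_div_add hφf hφf'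
    (integrable_mul_log_of_ae_le_mul hg.ennreal_toReal hg'.ennreal_toReal hf'_mem
      (ae_of_all _ fun _ => toReal_nonneg) hff') hf'log
    (hff'.mono fun z hz h => le_antisymm (hz.trans (by rw [show f' z = 0 from h, mul_zero]))
      toReal_nonneg) hcross
  rw [kl_withDensity_eq_ofReal_integral hg hφf,
    kl_withDensity_withDensity_eq_ofReal_integral hg hg' (hg'_top.mono fun _ => ne_of_lt)
      (hgg'.mono fun z hz h => by simpa [h] using hz) hmid,
    kl_withDensity_eq_ofReal_integral hg' hφf', ← ofReal_add, hreal]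
  · exact integral_nonneg fun _ => mul_nonneg toReal_nonneg (phi_nonneg (by positivity))
  · exact integral_nonneg fun _ => phi_nonneg toReal_nonneg

end KLWithDensity

section WithDensity

variable {α ι : Type*} [MeasurableSpace α]

lemma ae_le_of_withDensity_le {m : Measure α} [SigmaFinite m] {f g : α → ℝ≥0∞}
    (hf : Measurable f) (h : m.withDensity f ≤ m.withDensity g) : f ≤ᵐ[m] g :=
  ae_le_of_forall_setLIntegral_le_of_sigmaFinite hf fun s hs _ => by
    simpa only [withDensity_apply _ hs] using Measure.le_iff'.1 h s

lemma lintegral_ofReal_le_of_ae_le {m : Measure α} [IsProbabilityMeasure m] {f : α → ℝ} {C : ℝ}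
    (h : ∀ᵐ x ∂m, f x ≤ C) :
    ∫⁻ x, ENNReal.ofReal (f x) ∂m ≤ ENNReal.ofReal C :=
  (lintegral_mono_ae (h.mono fun _ hx => ofReal_le_ofReal hx)).trans_eq (by simp)

lemma withDensity_ofReal_le_smul {m : Measure α} {f : α → ℝ} {C : ℝ} (h : ∀ᵐ x ∂m, f x ≤ C) :
    m.withDensity (fun x => .ofReal (f x)) ≤ ENNReal.ofReal C • m := by
  rw [← withDensity_const]
  exact withDensity_mono (h.mono fun _ hx => ofReal_le_ofReal hx)

lemma ae_inv_le_of_le_smul_withDensity {m : Measure α} [SigmaFinite m] {u : α → ℝ} {C : ℝ}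
    (hC : 0 < C) (h : m ≤ ENNReal.ofReal C • m.withDensity fun x => .ofReal (u x)) :
    ∀ᵐ x ∂m, C⁻¹ ≤ u x := by
  rw [← withDensity_smul' _ _ ofReal_ne_top] at h
  conv_lhs at h => rw [← withDensity_one (μ := m)]
  filter_upwards [ae_le_of_withDensity_le measurable_one h] with x hx
  rw [Pi.one_apply, Pi.smul_apply, smul_eq_mul, ← ofReal_mul hC.le, one_le_ofReal] at hx
  exact (inv_le_iff_one_le_mul₀' hC).2 hx

lemma le_inv_smul_of_smul_le {m m' : Measure α} {a : ℝ≥0∞} (ha0 : a ≠ 0) (ha : a ≠ ∞)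
    (h : a • m ≤ m') : m ≤ a⁻¹ • m' :=
  calc m = a⁻¹ • a • m := by rw [smul_smul, ENNReal.inv_mul_cancel ha0 ha, one_smul]
    _ ≤ a⁻¹ • m' := by gcongr

lemma le_smul_of_smul_le_of_sum_eq {m m' : ι → Measure α} {s : Finset ι} {i : ι} (hi : i ∈ s)
    {ρ ρ' : Measure α} {a b : ℝ≥0∞} (ha0 : a ≠ 0) (ha : a ≠ ∞) (hlow : a • ρ ≤ m i)
    (hsum : ∑ j ∈ s, m j = ∑ j ∈ s, m' j) (hup : ∀ j ∈ s, m' j ≤ b • ρ') :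
    ρ ≤ (a⁻¹ * (s.card * b)) • ρ' := by
  refine (le_inv_smul_of_smul_le ha0 ha ?_).trans_eq (smul_smul _ _ _)
  calc a • ρ ≤ m i := hlow
    _ ≤ ∑ j ∈ s, m j := Finset.single_le_sum (fun _ _ => bot_le) hi
    _ = ∑ j ∈ s, m' j := hsum
    _ ≤ ∑ _j ∈ s, b • ρ' := Finset.sum_le_sum hup
    _ = (s.card * b) • ρ' := by rw [Finset.sum_const, ← Nat.cast_smul_eq_nsmul ℝ≥0∞, smul_smul]

lemma sum_le_smul_sum [Fintype ι] {m m' : ι → Measure α} {D : ι → ℝ≥0∞}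
    (h : ∀ i, m i ≤ D i • m' i) : ∑ i, m i ≤ (∑ i, D i) • ∑ i, m' i := by
  rw [Finset.smul_sum]
  refine Finset.sum_le_sum fun i _ => (h i).trans ?_
  gcongr
  exact Finset.single_le_sum (fun _ _ => bot_le) (Finset.mem_univ i)

lemma sum_restrict_withDensity [Fintype ι] {K : Measure α} {S : ι → Set α}
    (hS : ∀ i, MeasurableSet (S i)) {h : ι → α → ℝ≥0∞} (hh : ∀ i, Measurable (h i)) :
    ∑ i, (K.restrict (S i)).withDensity (h i) = K.withDensity (∑ i, (S i).indicator (h i)) := by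
  simp_rw [← withDensity_indicator (hS _)]
  rw [← Measure.sum_fintype, ← withDensity_tsum fun i => (hh i).indicator (hS i), tsum_fintype]

end WithDensity

lemma sum_indicator_apply_of_mem {α ι M : Type*} [Fintype ι] [AddCommMonoid M] {S : ι → Set α}
    (hS : Pairwise (Function.onFun Disjoint S)) (h : ι → α → M) {i : ι} {p : α} (hp : p ∈ S i) :
    (∑ j, (S j).indicator (h j)) p = h i p := by
  rw [Finset.sum_apply, Finset.sum_eq_single i (fun j _ hji => Set.indicator_of_notMem
    (fun hpj => Set.disjoint_left.1 (hS hji) hpj hp) _) (by simp), Set.indicator_of_mem hp]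

lemma exists_pos_forall_ae_le_of_linftyPlus {ι Z : Type*} [Finite ι] [MeasurableSpace Z]
    {m : Measure Z} {u : ι → Z → ℝ} (h : ∀ i, LinftyPlus m (u i)) :
    ∃ C, 0 < C ∧ ∀ i, ∀ᵐ z ∂m, u i z ≤ C := by
  choose C hC using fun i => (h i).2.2
  obtain ⟨M, hM⟩ := Finite.exists_le C
  exact ⟨max M 1, by positivity, fun i => (hC i).mono fun z hz => hz.trans
    ((hM i).trans (le_max_left _ _))⟩

lemma log_toReal_prodDensity {X Y : Type*} {u : X → ℝ} {v : Y → ℝ} {p : X × Y}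
    (h : prodDensity u v p ≠ 0) :
    Real.log (prodDensity u v p).toReal = Real.log (u p.1) + Real.log (v p.2) := by
  have hpos : 0 < u p.1 * v p.2 := ENNReal.ofReal_pos.1 (pos_iff_ne_zero.2 h)
  rw [prodDensity, toReal_ofReal hpos.le,
    Real.log_mul (left_ne_zero_of_mul hpos.ne') (right_ne_zero_of_mul hpos.ne')]

section Marginals

variable {ι κ X Y : Type*} [MeasurableSpace X] [MeasurableSpace Y]

lemma integral_eq_integral_map_fst_add_integral_map_snd {P : Measure (X × Y)} {F : X × Y → ℝ}
    {a : X → ℝ} {b : Y → ℝ} (ha : Measurable a) (hb : Measurable b) (hF : Integrable F P)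
    (haint : Integrable a (P.map Prod.fst)) (hsplit : F =ᵐ[P] fun p => a p.1 + b p.2) :
    Integrable b (P.map Prod.snd) ∧
      ∫ p, F p ∂P = ∫ x, a x ∂P.map Prod.fst + ∫ y, b y ∂P.map Prod.snd := by
  have ha' : Integrable (fun p => a p.1) P :=
    (integrable_map_measure ha.aestronglyMeasurable measurable_fst.aemeasurable).1 haint
  have hb' : Integrable (fun p => b p.2) P :=
    (hF.sub ha').congr (hsplit.mono fun p hp => by simp [hp])
  refine ⟨(integrable_map_measure hb.aestronglyMeasurable measurable_snd.aemeasurable).2 hb', ?_⟩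
  rw [integral_congr_ae hsplit, integral_add ha' hb',
    integral_map measurable_fst.aemeasurable ha.aestronglyMeasurable,
    integral_map measurable_snd.aemeasurable hb.aestronglyMeasurable]

variable [Fintype ι] [DecidableEq κ] {q : ι → κ} {ν : Measure Y}

lemma sum_integral_eq_of_sum_fiber_eq {m m' : ι → Measure Y} (hm : ∀ i, m i ≪ ν)
    (hm' : ∀ i, m' i ≪ ν) {h : ι → Y → ℝ} (hq : ∀ i j, q i = q j → h i =ᵐ[ν] h j)
    (hint : ∀ i, Integrable (h i) (m i)) (hint' : ∀ i, Integrable (h i) (m' i))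
    (hsum : ∀ J, ∑ i with q i = J, m i = ∑ i with q i = J, m' i) :
    ∑ i, ∫ y, h i y ∂m i = ∑ i, ∫ y, h i y ∂m' i := by
  -- on the fiber of `J` every `h i` agrees `ν`-a.e. with `h i₀`
  have fiber (J : κ) (i₀ : ι) (hi₀ : q i₀ = J) (n : ι → Measure Y) (hn : ∀ i, n i ≪ ν)
      (hnint : ∀ i, Integrable (h i) (n i)) :
      ∑ i with q i = J, ∫ y, h i y ∂n i = ∫ y, h i₀ y ∂∑ i with q i = J, n i := by
    have heq : ∀ i ∈ Finset.univ.filter (q · = J), h i =ᵐ[n i] h i₀ := fun i hi =>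
      (hn i).ae_le (hq i i₀ ((Finset.mem_filter.1 hi).2.trans hi₀.symm))
    rw [integral_finsetSum_measure fun i hi => (hnint i).congr (heq i hi)]
    exact Finset.sum_congr rfl fun i hi => integral_congr_ae (heq i hi)
  have hmaps : ∀ i ∈ Finset.univ, q i ∈ Finset.univ.image q := fun i _ =>
    Finset.mem_image_of_mem q (Finset.mem_univ i)
  rw [← Finset.sum_fiberwise_of_maps_to hmaps, ← Finset.sum_fiberwise_of_maps_to hmaps]
  refine Finset.sum_congr rfl fun J hJ => ?_
  obtain ⟨i₀, -, hi₀⟩ := Finset.mem_image.1 hJ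
  rw [fiber J i₀ hi₀ m hm hint, fiber J i₀ hi₀ m' hm' hint', hsum]

lemma sum_integral_eq_of_marginals {m m' : ι → Measure (X × Y)} {F : X × Y → ℝ}
    {a : ι → X → ℝ} {b : ι → Y → ℝ} (ha : ∀ i, Measurable (a i)) (hb : ∀ i, Measurable (b i))
    (hF : ∀ i, Integrable F (m i)) (hF' : ∀ i, Integrable F (m' i))
    (hsplit : ∀ i, F =ᵐ[m i] fun p => a i p.1 + b i p.2)
    (hsplit' : ∀ i, F =ᵐ[m' i] fun p => a i p.1 + b i p.2)
    (hX : ∀ i, (m i).map Prod.fst = (m' i).map Prod.fst)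
    (haint : ∀ i, Integrable (a i) ((m i).map Prod.fst))
    (hY : ∀ J, ∑ i with q i = J, (m i).map Prod.snd = ∑ i with q i = J, (m' i).map Prod.snd)
    (hYac : ∀ i, (m i).map Prod.snd ≪ ν) (hYac' : ∀ i, (m' i).map Prod.snd ≪ ν)
    (hbq : ∀ i j, q i = q j → b i =ᵐ[ν] b j) :
    ∑ i, ∫ p, F p ∂m i = ∑ i, ∫ p, F p ∂m' i := by
  have hsp i := integral_eq_integral_map_fst_add_integral_map_snd (ha i) (hb i) (hF i) (haint i)
    (hsplit i)
  have hsp' i := integral_eq_integral_map_fst_add_integral_map_snd (ha i) (hb i) (hF' i)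
    (hX i ▸ haint i) (hsplit' i)
  simp only [fun i => (hsp i).2, fun i => (hsp' i).2, Finset.sum_add_distrib, hX]
  rw [sum_integral_eq_of_sum_fiber_eq hYac hYac' hbq (fun i => (hsp i).1) (fun i => (hsp' i).1)
    hY]

end Marginals

lemma measurable_prodDensity {X Y : Type*} [MeasurableSpace X] [MeasurableSpace Y] {u : X → ℝ}
    {v : Y → ℝ} (hu : Measurable u) (hv : Measurable v) : Measurable (prodDensity u v) :=
  ((hu.comp measurable_fst).mul (hv.comp measurable_snd)).ennreal_ofReal

lemma kmeas_le_prod {X Y : Type*} [MeasurableSpace X] [MeasurableSpace Y] {μ : Measure X}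
    {ν : Measure Y} [SFinite ν] {c : X × Y → ℝ} {ε : ℝ} (hc0 : ∀ p, 0 ≤ c p) (hε : 0 < ε) :
    Kmeas μ ν c ε ≤ μ.prod ν :=
  (withDensity_mono (ae_of_all _ fun p => ofReal_exp_neg_div_le_one (hc0 p) hε)).trans_eq
    withDensity_one

def scaledKernel {X Y : Type*} [MeasurableSpace X] [MeasurableSpace Y] (μ : Measure X)
    (ν : Measure Y) [SFinite ν] (c : X × Y → ℝ) (ε : ℝ) (A : Set X) (u : X → ℝ) (v : Y → ℝ) :
    Measure (X × Y) :=
  ((Kmeas μ ν c ε).restrict (A ×ˢ Set.univ)).withDensity (prodDensity u v)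

lemma ae_mem_scaledKernel {X Y : Type*} [MeasurableSpace X] [MeasurableSpace Y] {μ : Measure X}
    {ν : Measure Y} [SFinite ν] {c : X × Y → ℝ} {ε : ℝ} {A : Set X} {u : X → ℝ} {v : Y → ℝ}
    (hA : MeasurableSet A) :
    ∀ᵐ p ∂scaledKernel μ ν c ε A u v, p ∈ A ×ˢ (Set.univ : Set Y) :=
  (withDensity_absolutelyContinuous _ _).ae_le (ae_restrict_mem (hA.prod MeasurableSet.univ))

section ScaledKernel

variable {X Y : Type*} [MeasurableSpace X] [MeasurableSpace Y] {μ : Measure X} {ν : Measure Y}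
  [SFinite μ] [SFinite ν] {c : X × Y → ℝ} {ε : ℝ} {A : Set X} {u : X → ℝ} {v : Y → ℝ}

lemma scaledKernel_eq_withDensity_prod (hc : Measurable c) (hA : MeasurableSet A)
    (hu : Measurable u) (hv : Measurable v) (hu0 : ∀ᵐ x ∂μ, 0 ≤ u x) :
    scaledKernel μ ν c ε A u v =
      (((μ.restrict A).withDensity fun x => .ofReal (u x)).prod
        (ν.withDensity fun y => .ofReal (v y))).withDensity
        fun p => .ofReal (Real.exp (-c p / ε)) := by
  have hk : Measurable fun p => ENNReal.ofReal (Real.exp (-c p / ε)) :=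
    (hc.neg.div_const ε).exp.ennreal_ofReal
  rw [scaledKernel, Kmeas, restrict_withDensity (hA.prod MeasurableSet.univ),
    ← Measure.prod_restrict A Set.univ, Measure.restrict_univ,
    prod_withDensity hu.ennreal_ofReal hv.ennreal_ofReal,
    ← withDensity_mul _ hk (measurable_prodDensity hu hv), ← withDensity_mul _ (by fun_prop) hk]
  refine withDensity_congr_ae ?_
  filter_upwards [Measure.quasiMeasurePreserving_fst.ae (ae_restrict_of_ae hu0)] with p hp
  simp [prodDensity, ENNReal.ofReal_mul hp, mul_comm]

lemma scaledKernel_le_prod (hc : Measurable c) (hc0 : ∀ p, 0 ≤ c p) (hε : 0 < ε)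
    (hA : MeasurableSet A) (hu : Measurable u) (hv : Measurable v) (hu0 : ∀ᵐ x ∂μ, 0 ≤ u x) :
    scaledKernel μ ν c ε A u v ≤
      ((μ.restrict A).withDensity fun x => .ofReal (u x)).prod
        (ν.withDensity fun y => .ofReal (v y)) := by
  rw [scaledKernel_eq_withDensity_prod hc hA hu hv hu0]
  exact (withDensity_mono (ae_of_all _ fun p => ofReal_exp_neg_div_le_one (hc0 p) hε)).trans_eq
    withDensity_one

lemma smul_prod_le_scaledKernel (hc : Measurable c) {cmax : ℝ} (hcmax : ∀ p, c p ≤ cmax)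
    (hε : 0 < ε) (hA : MeasurableSet A) (hu : Measurable u) (hv : Measurable v)
    (hu0 : ∀ᵐ x ∂μ, 0 ≤ u x) :
    ENNReal.ofReal (Real.exp (-cmax / ε)) •
      ((μ.restrict A).withDensity fun x => .ofReal (u x)).prod
        (ν.withDensity fun y => .ofReal (v y)) ≤ scaledKernel μ ν c ε A u v := by
  rw [scaledKernel_eq_withDensity_prod hc hA hu hv hu0, ← withDensity_const]
  exact withDensity_mono (ae_of_all _ fun p => ofReal_le_ofReal (Real.exp_le_exp.2
    (div_le_div_of_nonneg_right (neg_le_neg (hcmax p)) hε.le)))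

lemma restrict_le_smul_withDensity_of_map_fst_scaledKernel [IsProbabilityMeasure ν]
    (hc : Measurable c) (hc0 : ∀ p, 0 ≤ c p) (hε : 0 < ε) (hA : MeasurableSet A)
    (hu : Measurable u) (hv : Measurable v) (hu0 : ∀ᵐ x ∂μ, 0 ≤ u x) {C : ℝ}
    (hvC : ∀ᵐ y ∂ν, v y ≤ C) (hmarg : (scaledKernel μ ν c ε A u v).map Prod.fst = μ.restrict A) :
    μ.restrict A ≤ ENNReal.ofReal C • (μ.restrict A).withDensity fun x => .ofReal (u x) :=
  calc μ.restrict A = (scaledKernel μ ν c ε A u v).map Prod.fst := hmarg.symm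
    _ ≤ (((μ.restrict A).withDensity fun x => .ofReal (u x)).prod
          (ν.withDensity fun y => .ofReal (v y))).map Prod.fst :=
        Measure.map_mono (scaledKernel_le_prod hc hc0 hε hA hu hv hu0) measurable_fst
    _ = (ν.withDensity fun y => .ofReal (v y)) Set.univ •
          (μ.restrict A).withDensity fun x => .ofReal (u x) := Measure.map_fst_prod
    _ ≤ _ := by
        gcongr
        rw [withDensity_apply _ MeasurableSet.univ, Measure.restrict_univ]
        exact lintegral_ofReal_le_of_ae_le hvC

lemma map_snd_scaledKernel_le [IsProbabilityMeasure μ] (hc : Measurable c) (hc0 : ∀ p, 0 ≤ c p)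
    (hε : 0 < ε) (hA : MeasurableSet A) (hu : Measurable u) (hv : Measurable v)
    (hu0 : ∀ᵐ x ∂μ, 0 ≤ u x) {C : ℝ} (huC : ∀ᵐ x ∂μ, u x ≤ C) :
    (scaledKernel μ ν c ε A u v).map Prod.snd ≤
      ENNReal.ofReal C • ν.withDensity fun y => .ofReal (v y) :=
  calc (scaledKernel μ ν c ε A u v).map Prod.snd
      ≤ (((μ.restrict A).withDensity fun x => .ofReal (u x)).prod
          (ν.withDensity fun y => .ofReal (v y))).map Prod.snd :=
        Measure.map_mono (scaledKernel_le_prod hc hc0 hε hA hu hv hu0) measurable_snd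
    _ = ((μ.restrict A).withDensity fun x => .ofReal (u x)) Set.univ •
          ν.withDensity fun y => .ofReal (v y) := Measure.map_snd_prod
    _ ≤ _ := by
        gcongr
        rw [withDensity_apply _ MeasurableSet.univ, Measure.restrict_univ]
        exact (setLIntegral_le_lintegral _ _).trans (lintegral_ofReal_le_of_ae_le huC)

lemma smul_withDensity_le_map_snd_scaledKernel (hc : Measurable c) {cmax : ℝ}
    (hcmax : ∀ p, c p ≤ cmax) (hε : 0 < ε) (hA : MeasurableSet A) (hu : Measurable u)
    (hv : Measurable v) (hu0 : ∀ᵐ x ∂μ, 0 ≤ u x) :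
    (ENNReal.ofReal (Real.exp (-cmax / ε)) * ∫⁻ x in A, .ofReal (u x) ∂μ) •
        ν.withDensity (fun y => .ofReal (v y)) ≤
      (scaledKernel μ ν c ε A u v).map Prod.snd :=
  calc _ = (ENNReal.ofReal (Real.exp (-cmax / ε)) •
          ((μ.restrict A).withDensity fun x => .ofReal (u x)).prod
            (ν.withDensity fun y => .ofReal (v y))).map Prod.snd := by
        rw [Measure.map_smul, Measure.map_snd_prod, withDensity_apply _ MeasurableSet.univ,
          Measure.restrict_univ, smul_smul]
    _ ≤ _ := Measure.map_mono (smul_prod_le_scaledKernel hc hcmax hε hA hu hv hu0) measurable_snd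

end ScaledKernel

section ScaledKernelComparison

variable {X Y : Type*} [MeasurableSpace X] [MeasurableSpace Y] {μ : Measure X} {ν : Measure Y}
  [IsProbabilityMeasure μ] [IsProbabilityMeasure ν] {c : X × Y → ℝ} {ε : ℝ} {A : Set X}
  {u u' : X → ℝ} {v v' : Y → ℝ}

lemma map_snd_scaledKernel_absolutelyContinuous :
    (scaledKernel μ ν c ε A u v).map Prod.snd ≪ ν := by
  have hK : scaledKernel μ ν c ε A u v ≪ μ.prod ν :=
    (withDensity_absolutelyContinuous _ _).trans
      ((Measure.absolutelyContinuous_of_le Measure.restrict_le_self).trans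
        (withDensity_absolutelyContinuous _ _))
  simpa using hK.map measurable_snd

lemma scaledKernel_le_smul_scaledKernel (hc : Measurable c) (hc0 : ∀ p, 0 ≤ c p) {cmax : ℝ}
    (hcmax : ∀ p, c p ≤ cmax) (hε : 0 < ε) (hA : MeasurableSet A) (hu : Measurable u)
    (hv : Measurable v) (hu0 : ∀ᵐ x ∂μ, 0 ≤ u x) (hu' : Measurable u') (hv' : Measurable v')
    (hu'0 : ∀ᵐ x ∂μ, 0 ≤ u' x) {Cu Cv' : ℝ} (huC : ∀ᵐ x ∂μ, u x ≤ Cu)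
    (hv'C : ∀ᵐ y ∂ν, v' y ≤ Cv')
    (hmarg' : (scaledKernel μ ν c ε A u' v').map Prod.fst = μ.restrict A) {M : ℝ≥0∞}
    (hvv' : ν.withDensity (fun y => .ofReal (v y)) ≤ M • ν.withDensity fun y => .ofReal (v' y)) :
    scaledKernel μ ν c ε A u v ≤
      ((ENNReal.ofReal (Real.exp (-cmax / ε)))⁻¹ *
        (ENNReal.ofReal Cu * ENNReal.ofReal Cv' * M)) •
        scaledKernel μ ν c ε A u' v' := by
  have hα : (μ.restrict A).withDensity (fun x => .ofReal (u x)) ≤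
      (ENNReal.ofReal Cu * ENNReal.ofReal Cv') •
        (μ.restrict A).withDensity fun x => .ofReal (u' x) :=
    calc (μ.restrict A).withDensity (fun x => .ofReal (u x))
        ≤ ENNReal.ofReal Cu • μ.restrict A := withDensity_ofReal_le_smul (ae_restrict_of_ae huC)
      _ ≤ ENNReal.ofReal Cu • ENNReal.ofReal Cv' •
            (μ.restrict A).withDensity fun x => .ofReal (u' x) := by
          gcongr
          exact restrict_le_smul_withDensity_of_map_fst_scaledKernel hc hc0 hε hA hu' hv' hu'0
            hv'C hmarg'
      _ = _ := smul_smul _ _ _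
  calc scaledKernel μ ν c ε A u v
      ≤ ((μ.restrict A).withDensity fun x => .ofReal (u x)).prod
          (ν.withDensity fun y => .ofReal (v y)) := scaledKernel_le_prod hc hc0 hε hA hu hv hu0
    _ ≤ ((ENNReal.ofReal Cu * ENNReal.ofReal Cv') •
          (μ.restrict A).withDensity fun x => .ofReal (u' x)).prod
          (M • ν.withDensity fun y => .ofReal (v' y)) := Measure.prod_mono hα hvv'
    _ = (ENNReal.ofReal Cu * ENNReal.ofReal Cv' * M) •
          ((μ.restrict A).withDensity fun x => .ofReal (u' x)).prod
            (ν.withDensity fun y => .ofReal (v' y)) := by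
        rw [Measure.prod_smul_left, Measure.prod_smul_right, smul_smul]
    _ ≤ (ENNReal.ofReal Cu * ENNReal.ofReal Cv' * M) •
          (ENNReal.ofReal (Real.exp (-cmax / ε)))⁻¹ • scaledKernel μ ν c ε A u' v' := by
        gcongr
        exact le_inv_smul_of_smul_le (ofReal_pos.2 (Real.exp_pos _)).ne' ofReal_ne_top
          (smul_prod_le_scaledKernel hc hcmax hε hA hu' hv' hu'0)
    _ = _ := by rw [smul_smul, mul_comm]

end ScaledKernelComparison

def planDensity {ι X Y : Type*} [Fintype ι] (Xc : ι → Set X) (u : ι → X → ℝ) (v : ι → Y → ℝ) :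
    X × Y → ℝ≥0∞ :=
  ∑ i, (Xc i ×ˢ Set.univ).indicator (prodDensity (u i) (v i))

lemma planDensity_apply_of_mem {ι X Y : Type*} [Fintype ι] {Xc : ι → Set X} {u : ι → X → ℝ}
    {v : ι → Y → ℝ} (hXd : ∀ i j, i ≠ j → Disjoint (Xc i) (Xc j)) {i : ι}
    {p : X × Y} (hp : p.1 ∈ Xc i) : planDensity Xc u v p = prodDensity (u i) (v i) p :=
  sum_indicator_apply_of_mem (fun i j hij => Set.disjoint_prod.2 (Or.inl (hXd i j hij))) _
    (Set.mk_mem_prod hp (Set.mem_univ p.2))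

section PlanDensity

variable {ι X Y : Type*} [Fintype ι] [MeasurableSpace X] [MeasurableSpace Y]
  {Xc : ι → Set X} {u : ι → X → ℝ} {v : ι → Y → ℝ}

lemma measurable_planDensity (hXm : ∀ i, MeasurableSet (Xc i)) (hu : ∀ i, Measurable (u i))
    (hv : ∀ i, Measurable (v i)) : Measurable (planDensity Xc u v) :=
  by simpa only [planDensity, ← Finset.sum_apply] using Finset.measurable_sum _ fun i _ =>
    (measurable_prodDensity (hu i) (hv i)).indicator ((hXm i).prod MeasurableSet.univ)

lemma sum_scaledKernel_eq_withDensity {μ : Measure X} {ν : Measure Y} [SFinite ν]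
    {c : X × Y → ℝ} {ε : ℝ} (hXm : ∀ i, MeasurableSet (Xc i)) (hu : ∀ i, Measurable (u i))
    (hv : ∀ i, Measurable (v i)) :
    ∑ i, scaledKernel μ ν c ε (Xc i) (u i) (v i) =
      (Kmeas μ ν c ε).withDensity (planDensity Xc u v) :=
  sum_restrict_withDensity (fun i => (hXm i).prod MeasurableSet.univ) fun i =>
    measurable_prodDensity (hu i) (hv i)

lemma exists_ae_planDensity_le {μ : Measure X} {ν : Measure Y} [SFinite μ] [SFinite ν]
    {K : Measure (X × Y)} (hK : K ≪ μ.prod ν) (hu : ∀ i, LinftyPlus μ (u i))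
    (hv : ∀ i, LinftyPlus ν (v i)) : ∃ C : ℝ≥0, ∀ᵐ p ∂K, planDensity Xc u v p ≤ C := by
  obtain ⟨Cu, -, hCu⟩ := exists_pos_forall_ae_le_of_linftyPlus hu
  obtain ⟨Cv, -, hCv⟩ := exists_pos_forall_ae_le_of_linftyPlus hv
  refine ⟨Fintype.card ι * (Cu * Cv).toNNReal, ?_⟩
  filter_upwards [hK.ae_le (Measure.quasiMeasurePreserving_fst.ae
      (ae_all_iff.2 fun i => (hu i).2.1.and (hCu i))),
    hK.ae_le (Measure.quasiMeasurePreserving_snd.ae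
      (ae_all_iff.2 fun i => (hv i).2.1.and (hCv i)))] with p hx hy
  calc planDensity Xc u v p
      ≤ ∑ _i : ι, ENNReal.ofReal (Cu * Cv) := by
        rw [planDensity, Finset.sum_apply]
        refine Finset.sum_le_sum fun i _ => (Set.indicator_le_self' (fun _ _ => bot_le) p).trans ?_
        exact ofReal_le_ofReal (mul_le_mul (hx i).2 (hy i).2 (hy i).1 ((hx i).1.trans (hx i).2))
    _ = _ := by simp [ENNReal.ofReal]

end PlanDensity

section FamilyOfPlans

variable {ι κ X Y : Type*} [Fintype ι] [DecidableEq κ] [MeasurableSpace X] [MeasurableSpace Y]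
  {μ : Measure X} {ν : Measure Y} [IsProbabilityMeasure μ] [IsProbabilityMeasure ν]
  {c : X × Y → ℝ} {ε : ℝ} {Xc : ι → Set X} {q : ι → κ} {u u' : ι → X → ℝ} {v v' : ι → Y → ℝ}

lemma exists_withDensity_le_smul_withDensity (hc : Measurable c)
    (hc0 : ∀ p, 0 ≤ c p) {cmax : ℝ} (hcmax : ∀ p, c p ≤ cmax) (hε : 0 < ε)
    (hXm : ∀ i, MeasurableSet (Xc i)) (hpos : ∀ i, 0 < μ (Xc i))
    (hu : ∀ i, LinftyPlus μ (u i)) (hv : ∀ i, LinftyPlus ν (v i))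
    (hu' : ∀ i, LinftyPlus μ (u' i)) (hv' : ∀ i, LinftyPlus ν (v' i))
    (hX : ∀ i, (scaledKernel μ ν c ε (Xc i) (u i) (v i)).map Prod.fst = μ.restrict (Xc i))
    (hY : ∀ J, ∑ i with q i = J, (scaledKernel μ ν c ε (Xc i) (u' i) (v' i)).map Prod.snd =
      ∑ i with q i = J, (scaledKernel μ ν c ε (Xc i) (u i) (v i)).map Prod.snd)
    (hvconst : ∀ i j, q i = q j → v' i =ᵐ[ν] v' j) (i : ι) :
    ∃ M ≠ ∞, ν.withDensity (fun y => .ofReal (v i y)) ≤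
      M • ν.withDensity fun y => .ofReal (v' i y) := by
  obtain ⟨Cu, hCu⟩ := (hu i).2.2
  obtain ⟨Cv, hCv⟩ := (hv i).2.2
  obtain ⟨Cu', -, hCu'⟩ := exists_pos_forall_ae_le_of_linftyPlus hu'
  have hmass : μ (Xc i) ≤ ENNReal.ofReal Cv * ∫⁻ x in Xc i, .ofReal (u i x) ∂μ := by
    simpa [withDensity_apply] using Measure.le_iff'.1
      (restrict_le_smul_withDensity_of_map_fst_scaledKernel hc hc0 hε (hXm i) (hu i).1 (hv i).1
        (hu i).2.1 hCv (hX i)) Set.univ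
  set a := ENNReal.ofReal (Real.exp (-cmax / ε)) * ∫⁻ x in Xc i, .ofReal (u i x) ∂μ
  have ha0 : a ≠ 0 := mul_ne_zero (ofReal_pos.2 (Real.exp_pos _)).ne' fun h => by
    rw [h, mul_zero] at hmass
    exact (hpos i).ne' (le_antisymm hmass bot_le)
  have ha : a ≠ ∞ := mul_ne_top ofReal_ne_top (ne_top_of_le_ne_top ofReal_ne_top
    ((setLIntegral_le_lintegral _ _).trans (lintegral_ofReal_le_of_ae_le hCu)))
  refine ⟨_, mul_ne_top (inv_ne_top.2 ha0) (mul_ne_top (natCast_ne_top _) ofReal_ne_top),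
    le_smul_of_smul_le_of_sum_eq (s := Finset.univ.filter (q · = q i))
      (m := fun j => (scaledKernel μ ν c ε (Xc j) (u j) (v j)).map Prod.snd)
      (m' := fun j => (scaledKernel μ ν c ε (Xc j) (u' j) (v' j)).map Prod.snd)
      (b := ENNReal.ofReal Cu') (by simp) ha0 ha
      (smul_withDensity_le_map_snd_scaledKernel hc hcmax hε (hXm i) (hu i).1 (hv i).1 (hu i).2.1)
      (hY (q i)).symm fun j hj => ?_⟩
  have hv'ij : (fun y => ENNReal.ofReal (v' i y)) =ᵐ[ν] fun y => .ofReal (v' j y) :=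
    (hvconst i j (Finset.mem_filter.1 hj).2.symm).mono fun _ hy => congrArg ENNReal.ofReal hy
  rw [withDensity_congr_ae hv'ij]
  exact map_snd_scaledKernel_le hc hc0 hε (hXm j) (hu' j).1 (hv' j).1 (hu' j).2.1 (hCu' j)

lemma exists_sum_scaledKernel_le_smul_sum (hc : Measurable c) (hc0 : ∀ p, 0 ≤ c p) {cmax : ℝ}
    (hcmax : ∀ p, c p ≤ cmax) (hε : 0 < ε) (hXm : ∀ i, MeasurableSet (Xc i))
    (hpos : ∀ i, 0 < μ (Xc i)) (hu : ∀ i, LinftyPlus μ (u i)) (hv : ∀ i, LinftyPlus ν (v i))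
    (hu' : ∀ i, LinftyPlus μ (u' i)) (hv' : ∀ i, LinftyPlus ν (v' i))
    (hX : ∀ i, (scaledKernel μ ν c ε (Xc i) (u i) (v i)).map Prod.fst = μ.restrict (Xc i))
    (hX' : ∀ i, (scaledKernel μ ν c ε (Xc i) (u' i) (v' i)).map Prod.fst = μ.restrict (Xc i))
    (hY : ∀ J, ∑ i with q i = J, (scaledKernel μ ν c ε (Xc i) (u' i) (v' i)).map Prod.snd =
      ∑ i with q i = J, (scaledKernel μ ν c ε (Xc i) (u i) (v i)).map Prod.snd)
    (hvconst : ∀ i j, q i = q j → v' i =ᵐ[ν] v' j) :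
    ∃ D ≠ ∞, ∑ i, scaledKernel μ ν c ε (Xc i) (u i) (v i) ≤
      D • ∑ i, scaledKernel μ ν c ε (Xc i) (u' i) (v' i) := by
  choose M hM hvv' using exists_withDensity_le_smul_withDensity hc hc0 hcmax hε hXm hpos hu hv hu'
    hv' hX hY hvconst
  obtain ⟨Cu, -, hCu⟩ := exists_pos_forall_ae_le_of_linftyPlus hu
  obtain ⟨Cv', -, hCv'⟩ := exists_pos_forall_ae_le_of_linftyPlus hv'
  refine ⟨_, ENNReal.sum_ne_top.2 fun i _ => ?_, sum_le_smul_sum fun i =>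
    scaledKernel_le_smul_scaledKernel hc hc0 hcmax hε (hXm i) (hu i).1 (hv i).1 (hu i).2.1
      (hu' i).1 (hv' i).1 (hu' i).2.1 (hCu i) (hCv' i) (hX' i) (hvv' i)⟩
  exact mul_ne_top (inv_ne_top.2 (ofReal_pos.2 (Real.exp_pos _)).ne')
    (mul_ne_top (mul_ne_top ofReal_ne_top ofReal_ne_top) (hM i))

lemma integral_log_planDensity_eq (hc : Measurable c) (hc0 : ∀ p, 0 ≤ c p) (hε : 0 < ε)
    (hXm : ∀ i, MeasurableSet (Xc i)) (hXd : ∀ i j, i ≠ j → Disjoint (Xc i) (Xc j))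
    (hu' : ∀ i, LinftyPlus μ (u' i)) (hv' : ∀ i, LinftyPlus ν (v' i))
    (hX : ∀ i, (scaledKernel μ ν c ε (Xc i) (u i) (v i)).map Prod.fst = μ.restrict (Xc i))
    (hX' : ∀ i, (scaledKernel μ ν c ε (Xc i) (u' i) (v' i)).map Prod.fst = μ.restrict (Xc i))
    (hY : ∀ J, ∑ i with q i = J, (scaledKernel μ ν c ε (Xc i) (u' i) (v' i)).map Prod.snd =
      ∑ i with q i = J, (scaledKernel μ ν c ε (Xc i) (u i) (v i)).map Prod.snd)
    (hvconst : ∀ i j, q i = q j → v' i =ᵐ[ν] v' j)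
    (hint : Integrable (fun p => Real.log (planDensity Xc u' v' p).toReal)
      (∑ i, scaledKernel μ ν c ε (Xc i) (u i) (v i)))
    (hint' : Integrable (fun p => Real.log (planDensity Xc u' v' p).toReal)
      (∑ i, scaledKernel μ ν c ε (Xc i) (u' i) (v' i)))
    (hne : ∀ᵐ p ∂∑ i, scaledKernel μ ν c ε (Xc i) (u i) (v i), planDensity Xc u' v' p ≠ 0)
    (hne' : ∀ᵐ p ∂∑ i, scaledKernel μ ν c ε (Xc i) (u' i) (v' i), planDensity Xc u' v' p ≠ 0) :
    ∫ p, Real.log (planDensity Xc u' v' p).toReal ∂∑ i, scaledKernel μ ν c ε (Xc i) (u i) (v i) =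
      ∫ p, Real.log (planDensity Xc u' v' p).toReal
        ∂∑ i, scaledKernel μ ν c ε (Xc i) (u' i) (v' i) := by
  have hle (w : ι → X → ℝ) (z : ι → Y → ℝ) (i : ι) :
      scaledKernel μ ν c ε (Xc i) (w i) (z i) ≤ ∑ j, scaledKernel μ ν c ε (Xc j) (w j) (z j) :=
    Finset.single_le_sum (f := fun j => scaledKernel μ ν c ε (Xc j) (w j) (z j))
      (fun _ _ => bot_le) (Finset.mem_univ i)
  have hsplit (w : ι → X → ℝ) (z : ι → Y → ℝ)
      (hw : ∀ᵐ p ∂∑ i, scaledKernel μ ν c ε (Xc i) (w i) (z i), planDensity Xc u' v' p ≠ 0)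
      (i : ι) : (fun p => Real.log (planDensity Xc u' v' p).toReal)
        =ᵐ[scaledKernel μ ν c ε (Xc i) (w i) (z i)]
          fun p => Real.log (u' i p.1) + Real.log (v' i p.2) := by
    filter_upwards [ae_mem_scaledKernel (hXm i),
      (Measure.absolutelyContinuous_of_le (hle w z i)).ae_le hw] with p hp hp0
    rw [planDensity_apply_of_mem hXd hp.1] at hp0 ⊢
    exact log_toReal_prodDensity hp0
  obtain ⟨Cu', -, hCu'⟩ := exists_pos_forall_ae_le_of_linftyPlus hu'
  obtain ⟨Cv', hCv'0, hCv'⟩ := exists_pos_forall_ae_le_of_linftyPlus hv'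
  have haint (i : ι) : Integrable (fun x => Real.log (u' i x)) (μ.restrict (Xc i)) := by
    have hlow := ae_inv_le_of_le_smul_withDensity hCv'0
      (restrict_le_smul_withDensity_of_map_fst_scaledKernel hc hc0 hε (hXm i) (hu' i).1
        (hv' i).1 (hu' i).2.1 (hCv' i) (hX' i))
    refine integrable_comp_of_ae_mem_Icc Real.measurable_log
      (Real.continuousOn_log.mono fun t ht => ?_) (hu' i).1 (hlow.and (ae_restrict_of_ae (hCu' i)))
    exact (lt_of_lt_of_le (inv_pos.2 hCv'0) ht.1).ne'
  rw [integral_finsetSum_measure fun i _ => hint.mono_measure (hle u v i),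
    integral_finsetSum_measure fun i _ => hint'.mono_measure (hle u' v' i)]
  exact sum_integral_eq_of_marginals (fun i => Real.measurable_log.comp (hu' i).1)
    (fun i => Real.measurable_log.comp (hv' i).1) (fun i => hint.mono_measure (hle u v i))
    (fun i => hint'.mono_measure (hle u' v' i)) (hsplit u v hne) (hsplit u' v' hne')
    (fun i => (hX i).trans (hX' i).symm) (fun i => (hX i).symm ▸ haint i) (fun J => (hY J).symm)
    (fun _ => map_snd_scaledKernel_absolutelyContinuous)
    (fun _ => map_snd_scaledKernel_absolutelyContinuous)
    (fun i j h => (hvconst i j h).mono fun _ hy => congrArg Real.log hy)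

end FamilyOfPlans

theorem decrement_eq_kl_general
    {X Y : Type*} [MeasurableSpace X] [MeasurableSpace Y]
    (μ : Measure X) (ν : Measure Y) [IsProbabilityMeasure μ] [IsProbabilityMeasure ν]
    (c : X × Y → ℝ) (hc : Measurable c) (cmax : ℝ)
    (hc0 : ∀ p, 0 ≤ c p) (hcmax : ∀ p, c p ≤ cmax)
    (ε : ℝ) (hε : 0 < ε)
    {ι κ : Type*} [Fintype ι] [DecidableEq κ]
    (Xc : ι → Set X) (hXm : ∀ i, MeasurableSet (Xc i))
    (hXd : ∀ i j, i ≠ j → Disjoint (Xc i) (Xc j))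
    (hpos : ∀ i, 0 < μ (Xc i))
    (q : ι → κ)
    (u u' : ι → X → ℝ) (v v' : ι → Y → ℝ)
    (hu : ∀ i, LinftyPlus μ (u i)) (hv : ∀ i, LinftyPlus ν (v i))
    (hu' : ∀ i, LinftyPlus μ (u' i)) (hv' : ∀ i, LinftyPlus ν (v' i))
    (πi πi' : ι → Measure (X × Y))
    (hπidef : ∀ i, πi i =
      ((Kmeas μ ν c ε).restrict (Xc i ×ˢ Set.univ)).withDensity (prodDensity (u i) (v i)))
    (hπidef' : ∀ i, πi' i =
      ((Kmeas μ ν c ε).restrict (Xc i ×ˢ Set.univ)).withDensity (prodDensity (u' i) (v' i)))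
    (π π' : Measure (X × Y)) (hπ : π = ∑ i, πi i) (hπ' : π' = ∑ i, πi' i)
    (hX : ∀ i, (πi i).map Prod.fst = μ.restrict (Xc i))
    (hX' : ∀ i, (πi' i).map Prod.fst = μ.restrict (Xc i))
    (hY : ∀ J : κ,
      (∑ i ∈ Finset.univ.filter fun i => q i = J, (πi' i).map Prod.snd) =
      (∑ i ∈ Finset.univ.filter fun i => q i = J, (πi i).map Prod.snd))
    (hvconst : ∀ i j, q i = q j → v' i =ᵐ[ν] v' j) :
    KL π (Kmeas μ ν c ε) = KL π π' + KL π' (Kmeas μ ν c ε) := by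
  obtain rfl : πi = fun i => scaledKernel μ ν c ε (Xc i) (u i) (v i) := funext hπidef
  obtain rfl : πi' = fun i => scaledKernel μ ν c ε (Xc i) (u' i) (v' i) := funext hπidef'
  subst hπ hπ'
  beta_reduce at hX hX' hY ⊢
  have hg := measurable_planDensity hXm (fun i => (hu i).1) (fun i => (hv i).1)
  have hg' := measurable_planDensity hXm (fun i => (hu' i).1) (fun i => (hv' i).1)
  have hπK := sum_scaledKernel_eq_withDensity (μ := μ) (ν := ν) (c := c) (ε := ε) hXm
    (fun i => (hu i).1) (fun i => (hv i).1)
  have hπ'K := sum_scaledKernel_eq_withDensity (μ := μ) (ν := ν) (c := c) (ε := ε) hXm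
    (fun i => (hu' i).1) (fun i => (hv' i).1)
  obtain ⟨D, hD, hdom⟩ := exists_sum_scaledKernel_le_smul_sum hc hc0 hcmax hε hXm hpos hu hv hu'
    hv' hX hX' hY hvconst
  lift D to ℝ≥0 using hD
  have : IsFiniteMeasure (Kmeas μ ν c ε) := isFiniteMeasure_of_le _ (kmeas_le_prod hc0 hε)
  have hgg' : planDensity Xc u v ≤ᵐ[Kmeas μ ν c ε] (D : ℝ≥0∞) • planDensity Xc u' v' :=
    ae_le_of_withDensity_le hg (by rwa [withDensity_smul _ hg', ← hπK, ← hπ'K])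
  obtain ⟨C, hg'C⟩ :=
    exists_ae_planDensity_le (Xc := Xc) (withDensity_absolutelyContinuous _ _) hu' hv'
  have hne' : ∀ᵐ p ∂∑ i, scaledKernel μ ν c ε (Xc i) (u' i) (v' i), planDensity Xc u' v' p ≠ 0 :=
    hπ'K ▸ (ae_withDensity_iff hg').2 (ae_of_all _ fun _ h => h)
  have hlog := integral_log_planDensity_eq hc hc0 hε hXm hXd hu' hv' hX hX' hY hvconst
    (hπK ▸ integrable_log_toReal_withDensity hg hg' hg'C hgg')
    (hπ'K ▸ integrable_log_toReal_withDensity (D := 1) hg' hg' hg'C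
      (ae_of_all _ fun _ => (one_mul _).ge))
    ((Measure.absolutelyContinuous_of_le_smul hdom).ae_le hne') hne'
  rw [hπK, hπ'K] at hlog ⊢
  exact kl_withDensity_eq_add_of_integral_log_eq hg hg' hg'C hgg' hlog

/-- Lemma 3.4, first part: decrement identity. If `π` and `π'`
are plans built from scaled kernels over a basic partition, with equal
`X`-marginals `μᵢ` on each basic cell, equal summed `Y`-marginals on each
composite cell (fibers of `q`), and `v'`-factors constant on composite cells,
then `KL(π|K) − KL(π'|K) = KL(π|π')`, stated additively. -/
theorem decrement_eq_kl
    {X Y : Type*} [MetricSpace X] [CompactSpace X] [MeasurableSpace X] [BorelSpace X]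
    [MetricSpace Y] [CompactSpace Y] [MeasurableSpace Y] [BorelSpace Y]
    (μ : Measure X) (ν : Measure Y) [IsProbabilityMeasure μ] [IsProbabilityMeasure ν]
    (c : X × Y → ℝ) (hc : Measurable c) (cmax : ℝ)
    (hc0 : ∀ p, 0 ≤ c p) (hcmax : ∀ p, c p ≤ cmax)
    (ε : ℝ) (hε : 0 < ε)
    {ι κ : Type*} [Fintype ι] [Fintype κ] [DecidableEq κ]
    (Xc : ι → Set X) (hXm : ∀ i, MeasurableSet (Xc i))
    (hXd : ∀ i j, i ≠ j → Disjoint (Xc i) (Xc j)) (hXu : (⋃ i, Xc i) = Set.univ)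
    (hpos : ∀ i, 0 < μ (Xc i))
    (q : ι → κ)
    (u u' : ι → X → ℝ) (v v' : ι → Y → ℝ)
    (hu : ∀ i, LinftyPlus μ (u i)) (hv : ∀ i, LinftyPlus ν (v i))
    (hu' : ∀ i, LinftyPlus μ (u' i)) (hv' : ∀ i, LinftyPlus ν (v' i))
    (πi πi' : ι → Measure (X × Y))
    (hπidef : ∀ i, πi i =
      ((Kmeas μ ν c ε).restrict (Xc i ×ˢ Set.univ)).withDensity (prodDensity (u i) (v i)))
    (hπidef' : ∀ i, πi' i =
      ((Kmeas μ ν c ε).restrict (Xc i ×ˢ Set.univ)).withDensity (prodDensity (u' i) (v' i)))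
    (π π' : Measure (X × Y)) (hπ : π = ∑ i, πi i) (hπ' : π' = ∑ i, πi' i)
    (hX : ∀ i, (πi i).map Prod.fst = μ.restrict (Xc i))
    (hX' : ∀ i, (πi' i).map Prod.fst = μ.restrict (Xc i))
    (hY : ∀ J : κ,
      (∑ i ∈ Finset.univ.filter fun i => q i = J, (πi' i).map Prod.snd) =
      (∑ i ∈ Finset.univ.filter fun i => q i = J, (πi i).map Prod.snd))
    (hvconst : ∀ i j, q i = q j → v' i =ᵐ[ν] v' j) :
    KL π (Kmeas μ ν c ε) = KL π π' + KL π' (Kmeas μ ν c ε) :=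
  decrement_eq_kl_general μ ν c hc cmax hc0 hcmax ε hε Xc hXm hXd hpos q u u' v v' hu hv hu' hv' πi
    πi' hπidef hπidef' π π' hπ hπ' hX hX' hY hvconst
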